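/- arXiv:1903.00953 — 3 statements merged into one kernel-verified Lean document; each statement's English description precedes it below -/
import Mathlib

section
/- For every real x > 1 and every natural number l, the Legendre polynomial satisfies P_l(x) > (1/3)·(x + (1/2)·√(x²−1))^l. -/
open MeasureTheory Real

/-- The `l`-th Legendre polynomial via the Laplace integral representation,
valid for `x > 1`. -/
noncomputable def legendreP (l : ℕ) (x : ℝ) : ℝ :=
  (1 / π) * ∫ φ in (0:ℝ)..π, (x + Real.sqrt (x ^ 2 - 1) * Real.cos φ) ^ l

/-! The integrand `(x + √(x²-1) cos φ)^l` of the Laplace representation is positive on `[0, π]`,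
and on `[0, π/3]`, where `cos φ ≥ 1/2`, it is at least `(x + √(x²-1)/2)^l`. Discarding the integral
over `[π/3, π]` therefore loses something positive, and the first third of the interval already
contributes `(π/3) (x + √(x²-1)/2)^l`; dividing by `π` gives the bound. -/

namespace Real

lemma sqrt_sq_sub_one_lt {x : ℝ} (hx : 0 < x) : √(x ^ 2 - 1) < x :=
  (sqrt_lt' hx).mpr (by linarith)

lemma add_mul_cos_pos {a b : ℝ} (hba : |b| < a) (φ : ℝ) : 0 < a + b * cos φ := by
  have hbcos : |b * cos φ| ≤ |b| := by
    rw [abs_mul]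
    exact mul_le_of_le_one_right (abs_nonneg b) (abs_cos_le_one φ)
  linarith [neg_abs_le (b * cos φ)]

lemma one_half_le_cos_of_mem_Icc {φ : ℝ} (hφ : φ ∈ Set.Icc 0 (π / 3)) : 1 / 2 ≤ cos φ := by
  rw [← cos_pi_div_three]
  exact cos_le_cos_of_nonneg_of_le_pi hφ.1 (by linarith [pi_pos]) hφ.2

end Real

namespace intervalIntegral

theorem mul_lt_integral_of_le_on_of_pos_on {f : ℝ → ℝ} (hf : Continuous f) {a c b m : ℝ}
    (hac : a ≤ c) (hcb : c < b) (hm : ∀ t ∈ Set.Icc a c, m ≤ f t)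
    (hpos : ∀ t ∈ Set.Ioo c b, 0 < f t) :
    (c - a) * m < ∫ t in a..b, f t := by
  have hfirst : (c - a) * m ≤ ∫ t in a..c, f t := by
    simpa using integral_mono_on hac (intervalIntegrable_const (μ := volume))
      (hf.intervalIntegrable a c) hm
  have hrest : 0 < ∫ t in c..b, f t :=
    intervalIntegral_pos_of_pos_on (hf.intervalIntegrable c b) hpos hcb
  rw [← integral_add_adjacent_intervals (hf.intervalIntegrable a c) (hf.intervalIntegrable c b)]
  linarith

end intervalIntegral

theorem legendre_lower_bound (x : ℝ) (hx : 1 < x) (l : ℕ) :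
    (1 / 3) * (x + (1 / 2) * Real.sqrt (x ^ 2 - 1)) ^ l < legendreP l x := by
  set s := √(x ^ 2 - 1)
  have hs0 : 0 ≤ s := sqrt_nonneg _
  have hsx : |s| < x := by
    rw [abs_of_nonneg hs0]
    exact sqrt_sq_sub_one_lt (by linarith)
  have hintegral : (π / 3 - 0) * (x + 1 / 2 * s) ^ l < ∫ φ in (0 : ℝ)..π, (x + s * cos φ) ^ l := by
    refine intervalIntegral.mul_lt_integral_of_le_on_of_pos_on (by fun_prop) (by positivity)
      (by linarith [pi_pos]) (fun φ hφ => ?_) (fun φ _ => pow_pos (add_mul_cos_pos hsx φ) l)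
    have hcos := mul_le_mul_of_nonneg_left (one_half_le_cos_of_mem_Icc hφ) hs0
    exact pow_le_pow_left₀ (by linarith) (by linarith) l
  calc (1 / 3) * (x + 1 / 2 * s) ^ l = 1 / π * ((π / 3 - 0) * (x + 1 / 2 * s) ^ l) := by
        rw [sub_zero]
        field_simp
    _ < legendreP l x := by
        rw [legendreP]
        gcongr
end

section
/- Let G be holomorphic in the upper quadrant {z : 0 ≤ Arg z ≤ π/2}, continuous up to the boundary, of polynomial growth, and suppose |G(z)|·|z|^{1+α} → 0 as |z| → ∞ along Arg z = 0 and |G(z)|/|z|^N → 0 as |z| → ∞ along Arg z = π/2, with N ∈ ℕ and α > 0. Then for every θ ∈ [0, π/2], |G(z)|·|z|^{1+α − (2θ/π)(1+α+N)} → 0 as |z| → ∞ with Arg z = θ. -/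
open Complex Filter Set Bornology Asymptotics


lemma abs_exp_E (a cc : ℝ) (z : ℂ) :
    ‖Complex.exp ((a:ℂ) * Complex.log z +
        ((cc / Real.pi : ℝ):ℂ) * I * (Complex.log z)^2)‖ =
      Real.exp ((a - 2 * cc * z.arg / Real.pi) * Real.log (‖z‖)) := by
  rw [Complex.norm_exp]
  congr 1
  have hre : (Complex.log z).re = Real.log (‖z‖) := Complex.log_re z
  have him : (Complex.log z).im = z.arg := Complex.log_im z
  rw [← hre, ← him]
  set L := Complex.log z
  simp only [Complex.add_re, Complex.mul_re, Complex.mul_im, Complex.ofReal_re,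
    Complex.ofReal_im, Complex.I_re, Complex.I_im, pow_two]
  ring

lemma exists_bound_of_tendsto (f : ℝ → ℝ) (hf : ContinuousOn f (Ici 0))
    (h0 : Tendsto f atTop (nhds 0)) : ∃ M, 0 ≤ M ∧ ∀ x, 0 ≤ x → f x ≤ M := by
  obtain ⟨R, hR⟩ := (h0.eventually (eventually_le_nhds one_pos)).exists_forall_of_atTop
  obtain ⟨M₀, hM₀⟩ := (isCompact_Icc (a := (0:ℝ)) (b := max R 0)).exists_bound_of_continuousOn
    (hf.mono (fun x hx => hx.1))
  refine ⟨max M₀ 1, le_trans zero_le_one (le_max_right _ _), fun x hx => ?_⟩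
  rcases le_or_gt x (max R 0) with h | h
  · exact le_trans (le_trans (le_abs_self _) (hM₀ x ⟨hx, h⟩)) (le_max_left _ _)
  · exact le_trans (hR x (le_of_lt (lt_of_le_of_lt (le_max_left R 0) h))) (le_max_right _ _)

lemma ray_abs_arg {r θ : ℝ} (hr : 0 < r) (hθ0 : 0 ≤ θ) (hθ1 : θ ≤ Real.pi / 2) :
    ‖r * Complex.exp (θ * I)‖ = r ∧ (↑r * Complex.exp (θ * I)).arg = θ := by
  constructor
  · rw [norm_mul, Complex.norm_exp_ofReal_mul_I, Complex.norm_real, Real.norm_eq_abs, _root_.abs_of_pos hr, mul_one]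
  · rw [Complex.exp_mul_I, Complex.arg_mul_cos_add_sin_mul_I hr]
    exact ⟨by linarith [Real.pi_pos], by linarith [Real.pi_pos]⟩

lemma one_le_abs_one_add {z : ℂ} (hre : 0 ≤ z.re) : 1 ≤ ‖1 + z‖ := by
  have h : (1:ℝ) ≤ (1 + z).re := by simp [Complex.add_re]; linarith
  calc (1:ℝ) ≤ (1+z).re := h
    _ ≤ |(1+z).re| := le_abs_self _
    _ ≤ ‖1+z‖ := Complex.abs_re_le_norm _

lemma abs_le_abs_one_add {z : ℂ} (hre : 0 ≤ z.re) : ‖z‖ ≤ ‖1 + z‖ := by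
  have h : ‖z‖ ^ 2 ≤ ‖1+z‖ ^ 2 := by
    rw [Complex.sq_norm, Complex.sq_norm, Complex.normSq_apply, Complex.normSq_apply]
    simp only [Complex.add_re, Complex.add_im, Complex.one_re, Complex.one_im]
    nlinarith
  nlinarith [norm_nonneg z, norm_nonneg (1+z)]
lemma pl_ray_tendsto (H : ℂ → ℂ)
    (hd : DiffContOnCl ℂ H (Ioi (0:ℝ) ×ℂ Ioi (0:ℝ)))
    (hB : ∃ c < (2:ℝ), ∃ B, H =O[cobounded ℂ ⊓ 𝓟 (Ioi (0:ℝ) ×ℂ Ioi (0:ℝ))]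
      fun z => Real.exp (B * ‖z‖ ^ c))
    (M : ℝ) (hM : 0 ≤ M)
    (hreB : ∀ x : ℝ, 0 ≤ x → ‖H x‖ ≤ M) (himB : ∀ x : ℝ, 0 ≤ x → ‖H (x * I)‖ ≤ M)
    (hre0 : Tendsto (fun r : ℝ => ‖H r‖) atTop (nhds 0))
    (him0 : Tendsto (fun r : ℝ => ‖H (r * I)‖) atTop (nhds 0))
    (θ : ℝ) (hθ0 : 0 ≤ θ) (hθ1 : θ ≤ Real.pi / 2) :
    Tendsto (fun r : ℝ => ‖H (r * Complex.exp (θ * I))‖) atTop (nhds 0) := by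
  rw [NormedAddCommGroup.tendsto_nhds_zero]
  intro ε hε
  -- choose R with boundary tails small
  have h3 : (0:ℝ) < ε / 3 := by positivity
  obtain ⟨R₁, hR₁⟩ := (hre0.eventually (eventually_le_nhds h3)).exists_forall_of_atTop
  obtain ⟨R₂, hR₂⟩ := (him0.eventually (eventually_le_nhds h3)).exists_forall_of_atTop
  set R : ℝ := max 1 (max R₁ R₂) with hRdef
  have hR1 : (1:ℝ) ≤ R := le_max_left _ _
  have hRpos : (0:ℝ) < R := lt_of_lt_of_le one_pos hR1
  set R' : ℝ := 3 * (M + 1) * R / ε with hR'def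
  have hR'pos : 0 < R' := by positivity
  -- the auxiliary function
  set F : ℂ → ℂ := fun z => H z * (z / (z + R')) with hFdef
  have hne : ∀ z : ℂ, 0 ≤ z.re → z + R' ≠ 0 := by
    intro z hz h
    have : (z + R').re = z.re + R' := by simp
    rw [h] at this
    simp at this
    nlinarith
  have hfrac : ∀ z : ℂ, 0 ≤ z.re → ‖z / (z + R')‖ ≤ 1 := by
    intro z hz
    rw [norm_div, div_le_one (by
      have := hne z hz
      exact norm_pos_iff.2 this)]
    have : ‖z‖ ^ 2 ≤ ‖z + R'‖ ^ 2 := by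
      rw [Complex.sq_norm, Complex.sq_norm, Complex.normSq_apply, Complex.normSq_apply]
      simp only [Complex.add_re, Complex.add_im, Complex.ofReal_re, Complex.ofReal_im]
      nlinarith
    nlinarith [norm_nonneg z, norm_nonneg (z + R')]
  have hfrac' : ∀ z : ℂ, 0 ≤ z.re → ‖z / (z + R')‖ ≤ ‖z‖ / R' := by
    intro z hz
    rw [norm_div]
    have hle : R' ≤ ‖z + R'‖ := by
      calc R' = |R'| := (abs_of_pos hR'pos).symm
      _ ≤ |(z + R').re| := by
          simp only [Complex.add_re, Complex.ofReal_re]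
          rw [abs_of_pos hR'pos, abs_of_pos (by linarith)]
          linarith
      _ ≤ ‖z + R'‖ := Complex.abs_re_le_norm _
    gcongr
  -- F is DiffContOnCl
  have hdF : DiffContOnCl ℂ F (Ioi (0:ℝ) ×ℂ Ioi (0:ℝ)) := by
    have hQ : closure (Ioi (0:ℝ) ×ℂ Ioi (0:ℝ)) = Ici (0:ℝ) ×ℂ Ici (0:ℝ) := by
      rw [Complex.closure_reProdIm, closure_Ioi]
    have hsub : (Ioi (0:ℝ) ×ℂ Ioi (0:ℝ)) ⊆ {z : ℂ | z + R' ≠ 0} := by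
      intro z hz
      exact hne z (le_of_lt hz.1)
    refine ⟨?_, ?_⟩
    · apply hd.differentiableOn.mul
      apply DifferentiableOn.div differentiableOn_id
      · exact (differentiable_id.add_const _).differentiableOn
      · intro z hz; exact hne z (le_of_lt hz.1)
    · apply hd.continuousOn.mul
      apply ContinuousOn.div continuousOn_id
      · exact (continuous_id.add continuous_const).continuousOn
      · intro z hz
        rw [hQ] at hz
        exact hne z hz.1
  -- growth bound for F
  have hBF : ∃ c < (2:ℝ), ∃ B, F =O[cobounded ℂ ⊓ 𝓟 (Ioi (0:ℝ) ×ℂ Ioi (0:ℝ))]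
      fun z => Real.exp (B * ‖z‖ ^ c) := by
    obtain ⟨c, hc, B, hO⟩ := hB
    refine ⟨c, hc, B, ?_⟩
    refine IsBigO.trans ?_ hO
    apply IsBigO.of_bound 1
    filter_upwards [mem_inf_of_right (mem_principal_self _)] with z hz
    rw [one_mul]
    simp only [hFdef, norm_mul]
    calc ‖H z‖ * ‖z / (z + (R':ℂ))‖ ≤ ‖H z‖ * 1 := by
          apply mul_le_mul_of_nonneg_left _ (norm_nonneg _)
          exact hfrac z (le_of_lt hz.1)
      _ = ‖H z‖ := mul_one _
  -- boundary bounds for F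
  have hRR' : M * (R / R') ≤ ε / 3 := by
    have : M * (R / R') = ε * (M * R/ (3 * (M+1) * R)) := by
      rw [hR'def]; field_simp
    rw [this]
    have h1 : M * R / (3 * (M+1) * R) ≤ 1/3 := by
      rw [div_le_div_iff₀ (by positivity) (by norm_num)]
      nlinarith
    calc ε * (M * R / (3 * (M+1) * R)) ≤ ε * (1/3) := by
          exact mul_le_mul_of_nonneg_left h1 (le_of_lt hε)
      _ = ε / 3 := by ring
  have hbound : ∀ (x : ℝ), 0 ≤ x → ∀ (w : ℂ), w.re = 0 ∨ w.re = x → ‖w‖ = x →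
      ‖H w‖ ≤ M → (R ≤ x → ‖H w‖ ≤ ε / 3) → ‖F w‖ ≤ ε / 3 := by
    intro x hx w hwre hwabs hHM hHtail
    have hwre' : 0 ≤ w.re := by rcases hwre with h | h <;> rw [h]; exact hx
    have : ‖F w‖ = ‖H w‖ * ‖w / (w + R')‖ := by
      simp [hFdef, norm_mul]
    rw [this]
    rcases le_or_gt R x with hRx | hxR
    · calc ‖H w‖ * ‖w / (w + R')‖ ≤ (ε/3) * 1 :=
          mul_le_mul (hHtail hRx) (hfrac w hwre') (norm_nonneg _) (by positivity)
        _ = ε/3 := mul_one _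
    · calc ‖H w‖ * ‖w / (w + R')‖ ≤ M * (‖w‖ / R') :=
          mul_le_mul hHM (hfrac' w hwre') (norm_nonneg _) hM
        _ ≤ M * (R / R') := by
            apply mul_le_mul_of_nonneg_left _ hM
            rw [hwabs]
            gcongr
        _ ≤ ε / 3 := hRR'
  -- Phragmén–Lindelöf
  have hPL : ∀ z : ℂ, 0 ≤ z.re → 0 ≤ z.im → ‖F z‖ ≤ ε / 3 := by
    intro z hzre hzim
    apply PhragmenLindelof.quadrant_I hdF hBF ?_ ?_ hzre hzim
    · intro x hx
      apply hbound x hx x (Or.inr (by simp)) (by simp [_root_.abs_of_nonneg hx]) (hreB x hx)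
      intro hRx
      exact hR₁ x (le_trans (le_trans (le_max_left _ _) (le_max_right _ _)) hRx)
    · intro x hx
      apply hbound x hx (x * I) (Or.inl (by simp)) (by simp [_root_.abs_of_nonneg hx]) (himB x hx)
      intro hRx
      exact hR₂ x (le_trans (le_trans (le_max_right _ _) (le_max_right _ _)) hRx)
  -- conclude on the ray
  have hcos : 0 ≤ Real.cos θ := Real.cos_nonneg_of_mem_Icc
    ⟨by linarith [Real.pi_pos], hθ1⟩
  have hsin : 0 ≤ Real.sin θ := Real.sin_nonneg_of_nonneg_of_le_pi hθ0
    (by linarith [Real.pi_pos])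
  filter_upwards [eventually_ge_atTop (max R' 1)] with r hr
  have hr1 : (1:ℝ) ≤ r := le_trans (le_max_right _ _) hr
  have hrR' : R' ≤ r := le_trans (le_max_left _ _) hr
  have hrpos : (0:ℝ) < r := lt_of_lt_of_le one_pos hr1
  set z : ℂ := r * Complex.exp (θ * I) with hzdef
  have habs : ‖z‖ = r := by
    rw [hzdef, norm_mul, Complex.norm_exp_ofReal_mul_I, Complex.norm_real, Real.norm_eq_abs,
      abs_of_pos hrpos, mul_one]
  have hzre : 0 ≤ z.re := by
    rw [hzdef]
    simp only [Complex.re_ofReal_mul, Complex.exp_ofReal_mul_I_re]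
    positivity
  have hzim : 0 ≤ z.im := by
    rw [hzdef]
    simp only [Complex.im_ofReal_mul, Complex.exp_ofReal_mul_I_im]
    positivity
  have hzne : z ≠ 0 := by
    intro h
    rw [h] at habs
    simp at habs
    linarith
  have hFz := hPL z hzre hzim
  have hHF : ‖H z‖ = ‖F z‖ * (‖z + R'‖ / r) := by
    have h1 : ‖z + R'‖ ≠ 0 := norm_ne_zero_iff.2 (hne z hzre)
    simp only [hFdef, norm_mul, norm_div, habs]
    field_simp
  rw [Real.norm_eq_abs, _root_.abs_of_nonneg (norm_nonneg _), hHF]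
  have habs2 : ‖z + R'‖ ≤ 2 * r := by
    calc ‖z + R'‖ ≤ ‖z‖ + ‖(R':ℂ)‖ := norm_add_le _ _
      _ = r + R' := by rw [habs, Complex.norm_real, Real.norm_eq_abs, abs_of_pos hR'pos]
      _ ≤ 2 * r := by linarith
  calc ‖F z‖ * (‖z + R'‖ / r) ≤ (ε/3) * (2*r / r) := by
        apply mul_le_mul hFz ?_ (by positivity) (by positivity)
        gcongr
    _ = (ε/3) * 2 := by field_simp
    _ < ε := by linarith

/-- Phragmén–Lindelöf interpolation of decay rates in the first quadrant:
decay like `|z|^{-(1+α)}` on the positive real axis and growth bounded by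
`|z|^N` on the imaginary axis interpolate to decay
`|z|^{-(1+α-(2θ/π)(1+α+N))}` on each intermediate ray. -/
theorem phragmen_lindelof_ray_decay (G : ℂ → ℂ) (N : ℕ) (α : ℝ) (hα : 0 < α)
    (hGd : DifferentiableOn ℂ G (interior {z : ℂ | 0 ≤ z.re ∧ 0 ≤ z.im}))
    (hGc : ContinuousOn G {z : ℂ | 0 ≤ z.re ∧ 0 ≤ z.im})
    (hpoly : ∃ C : ℝ, ∃ k : ℕ, ∀ z : ℂ, 0 ≤ z.re → 0 ≤ z.im →
      ‖G z‖ ≤ C * (1 + ‖z‖) ^ k)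
    (hreal : Tendsto (fun r : ℝ => ‖G r‖ * r ^ (1 + α)) atTop (nhds 0))
    (himag : Tendsto (fun r : ℝ => ‖G (r * Complex.I)‖ / r ^ (N : ℝ))
      atTop (nhds 0)) :
    ∀ θ ∈ Set.Icc (0 : ℝ) (Real.pi / 2),
      Tendsto (fun r : ℝ => ‖G (r * Complex.exp (θ * Complex.I))‖ *
          r ^ (1 + α - (2 * θ / Real.pi) * (1 + α + N)))
        atTop (nhds 0) := by
  intro θ hθ
  obtain ⟨hθ0, hθ1⟩ := hθ
  obtain ⟨C, k, hpoly⟩ := hpoly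
  have hC0 : 0 ≤ C := by
    have h := hpoly 0 le_rfl le_rfl
    simpa using (norm_nonneg (G 0)).trans h
  set S : Set ℂ := {z : ℂ | 0 ≤ z.re ∧ 0 ≤ z.im} with hSdef
  have hSclosed : (Ici (0:ℝ) ×ℂ Ici (0:ℝ)) = S := rfl
  have hSint : interior S = Ioi (0:ℝ) ×ℂ Ioi (0:ℝ) := by
    rw [← hSclosed, Complex.interior_reProdIm, interior_Ici]
  have hSclosure : closure (Ioi (0:ℝ) ×ℂ Ioi (0:ℝ)) = S := by
    rw [Complex.closure_reProdIm, closure_Ioi]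
    exact hSclosed
  set c : ℝ := 1 + α + N with hcdef
  have hcpos : 0 < c := by positivity
  set E : ℂ → ℂ := fun z => ((1 + α : ℝ):ℂ) * Complex.log z +
      ((c / Real.pi : ℝ):ℂ) * I * (Complex.log z)^2 with hEdef
  set H : ℂ → ℂ := fun z => G z * Complex.exp (E z) * (z / (1 + z))^(N+1) with hHdef
  -- master norm formula
  have hnorm : ∀ z : ℂ, ‖H z‖ = ‖G z‖ *
      Real.exp ((1 + α - 2*c*z.arg/Real.pi) * Real.log (‖z‖)) *
      (‖z‖ / ‖1 + z‖)^(N+1) := by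
    intro z
    rw [hHdef]
    simp only [norm_mul, norm_pow, norm_div]
    rw [abs_exp_E (1+α) c z]
  have hargQ : ∀ z : ℂ, 0 ≤ z.re → 0 ≤ z.im → 0 ≤ z.arg ∧ z.arg ≤ Real.pi / 2 :=
    fun z h1 h2 => ⟨Complex.arg_nonneg_iff.2 h2, Complex.arg_le_pi_div_two_iff.2 (Or.inl h1)⟩
  have hQopen : IsOpen (Ioi (0:ℝ) ×ℂ Ioi (0:ℝ)) := IsOpen.reProdIm isOpen_Ioi isOpen_Ioi
  have h1zne : ∀ z : ℂ, 0 ≤ z.re → (1 : ℂ) + z ≠ 0 := by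
    intro z hz h
    have h2 : ((1:ℂ) + z).re = 1 + z.re := by simp
    rw [h] at h2
    simp at h2
    linarith
  -- differentiability on the open quadrant
  have hHdiff : DifferentiableOn ℂ H (Ioi (0:ℝ) ×ℂ Ioi (0:ℝ)) := by
    intro z hz
    have hzs : z ∈ Complex.slitPlane := Complex.mem_slitPlane_iff.2 (Or.inl hz.1)
    have hG : DifferentiableAt ℂ G z := by
      apply hGd.differentiableAt
      rw [hSint]
      exact hQopen.mem_nhds hz
    have hlog : DifferentiableAt ℂ Complex.log z := differentiableAt_id.clog hzs
    have hE : DifferentiableAt ℂ E z := by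
      apply DifferentiableAt.add
      · exact (differentiableAt_const _).mul hlog
      · exact (differentiableAt_const _).mul (hlog.pow 2)
    have hfrac : DifferentiableAt ℂ (fun z : ℂ => (z / (1 + z))^(N+1)) z := by
      apply DifferentiableAt.pow
      exact differentiableAt_id.div ((differentiableAt_const _).add differentiableAt_id)
        (h1zne z (le_of_lt hz.1))
    exact ((hG.mul hE.cexp).mul hfrac).differentiableWithinAt
  -- a uniform small-ball bound
  have hsmall : ∀ w : ℂ, w ∈ S → ‖w‖ ≤ 1 → ‖H w‖ ≤ C * 2^k * ‖w‖ := by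
    intro w hwS hw1
    rcases eq_or_ne w 0 with rfl | hw0
    · have : H 0 = 0 := by
        rw [hHdef]
        simp
      rw [this]
      simp
    have hr0 : 0 < ‖w‖ := norm_pos_iff.2 hw0
    obtain ⟨harg0, harg1⟩ := hargQ w hwS.1 hwS.2
    set r : ℝ := ‖w‖ with hrdef
    set L : ℝ := Real.log r with hLdef
    have hL0 : L ≤ 0 := Real.log_nonpos (le_of_lt hr0) hw1
    have hd1 : 1 ≤ ‖1 + w‖ := one_le_abs_one_add hwS.1
    have hfrac_le : (r / ‖1 + w‖)^(N+1) ≤ r^(N+1) := by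
      apply pow_le_pow_left₀ (by positivity)
      exact div_le_self (le_of_lt hr0) hd1
    have hrpow : r^(N+1) = Real.exp ((N+1 : ℕ) * L) := by
      rw [Real.exp_nat_mul, hLdef, Real.exp_log hr0]
    have hGle : ‖G w‖ ≤ C * 2^k := by
      calc ‖G w‖ ≤ C * (1 + r)^k := hpoly w hwS.1 hwS.2
        _ ≤ C * 2^k := by
            apply mul_le_mul_of_nonneg_left _ hC0
            apply pow_le_pow_left₀ (by positivity)
            linarith
    have hq1 : 1 ≤ (1 + α - 2*c*w.arg/Real.pi) + (N+1 : ℕ) := by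
      have hπ : 0 < Real.pi := Real.pi_pos
      have : 2*c*w.arg/Real.pi ≤ c := by
        rw [div_le_iff₀ hπ]
        nlinarith
      push_cast
      rw [hcdef] at this ⊢
      linarith
    have hexp_le : Real.exp ((1 + α - 2*c*w.arg/Real.pi) * L) * r^(N+1) ≤ r := by
      rw [hrpow, ← Real.exp_add]
      have h1 : (1 + α - 2*c*w.arg/Real.pi) * L + (N+1:ℕ) * L
          = ((1 + α - 2*c*w.arg/Real.pi) + (N+1:ℕ)) * L := by ring
      rw [h1]
      calc Real.exp (((1 + α - 2*c*w.arg/Real.pi) + (N+1:ℕ)) * L) ≤ Real.exp (1 * L) := by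
            apply Real.exp_le_exp.2
            apply mul_le_mul_of_nonpos_right hq1 hL0 |>.trans_eq rfl
        _ = r := by rw [one_mul, hLdef, Real.exp_log hr0]
    calc ‖H w‖ = ‖G w‖ *
        (Real.exp ((1 + α - 2*c*w.arg/Real.pi) * L) * (r / ‖1 + w‖)^(N+1)) := by
          rw [hnorm w]; ring
      _ ≤ (C * 2^k) * (Real.exp ((1 + α - 2*c*w.arg/Real.pi) * L) * r^(N+1)) := by
          apply mul_le_mul hGle _ (by positivity) (by positivity)
          exact mul_le_mul_of_nonneg_left hfrac_le (le_of_lt (Real.exp_pos _))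
      _ ≤ (C * 2^k) * r := by
          exact mul_le_mul_of_nonneg_left hexp_le (by positivity)
  -- continuity on the closed quadrant
  have hHc : ContinuousOn H S := by
    intro z hz
    rcases eq_or_ne z 0 with rfl | hz0
    · have hH0 : H 0 = 0 := by rw [hHdef]; simp
      unfold ContinuousWithinAt
      rw [hH0]
      apply squeeze_zero_norm' (a := fun w : ℂ => C * 2^k * ‖w‖)
      · have hball : ∀ᶠ w : ℂ in nhdsWithin 0 S, ‖w‖ ≤ 1 := by
          apply Filter.Eventually.filter_mono nhdsWithin_le_nhds
          have : Metric.closedBall (0:ℂ) 1 ∈ nhds (0:ℂ) := Metric.closedBall_mem_nhds 0 one_pos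
          filter_upwards [this] with w hw
          simpa [Complex.dist_eq] using hw
        filter_upwards [hball, self_mem_nhdsWithin] with w hw1 hwS
        exact hsmall w hwS hw1
      · have : Continuous (fun w : ℂ => C * 2^k * ‖w‖) :=
          continuous_const.mul continuous_norm
        have h0 : (fun w : ℂ => C * 2^k * ‖w‖) 0 = 0 := by simp
        exact (this.tendsto' 0 0 h0).mono_left nhdsWithin_le_nhds
    · have hzs : z ∈ Complex.slitPlane := by
        rcases lt_or_eq_of_le hz.1 with h | h
        · exact Complex.mem_slitPlane_iff.2 (Or.inl h)
        · refine Complex.mem_slitPlane_iff.2 (Or.inr fun him => hz0 (Complex.ext h.symm him))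
      have hlog : ContinuousAt Complex.log z := continuousAt_clog hzs
      have hE : ContinuousAt E z := by
        apply ContinuousAt.add
        · exact continuousAt_const.mul hlog
        · exact continuousAt_const.mul (hlog.pow 2)
      have hfrac : ContinuousAt (fun z : ℂ => (z / (1 + z))^(N+1)) z := by
        apply ContinuousAt.pow
        exact continuousAt_id.div (continuousAt_const.add continuousAt_id) (h1zne z hz.1)
      exact ((hGc z hz).mul (hE.cexp.continuousWithinAt)).mul hfrac.continuousWithinAt
  -- growth bound
  have hB : ∃ c' < (2:ℝ), ∃ B, H =O[cobounded ℂ ⊓ 𝓟 (Ioi (0:ℝ) ×ℂ Ioi (0:ℝ))]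
      fun z => Real.exp (B * ‖z‖ ^ c') := by
    refine ⟨1, by norm_num, 1, ?_⟩
    set K : ℕ := k + (⌈α⌉₊ + 1) with hKdef
    set l : Filter ℂ := cobounded ℂ ⊓ 𝓟 (Ioi (0:ℝ) ×ℂ Ioi (0:ℝ)) with hldef
    have habs_tendsto : Tendsto (fun z : ℂ => ‖z‖) l atTop := by
      apply Tendsto.mono_left _ inf_le_left
      exact tendsto_norm_cobounded_atTop
    have hev1 : ∀ᶠ z : ℂ in l, 1 ≤ ‖z‖ := habs_tendsto.eventually_ge_atTop 1
    have hevQ : ∀ᶠ z : ℂ in l, z ∈ (Ioi (0:ℝ) ×ℂ Ioi (0:ℝ)) :=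
      Filter.Eventually.filter_mono inf_le_right (eventually_principal.2 fun z hz => hz)
    have hstep1 : H =O[l] fun z => ((1 + ‖z‖)^K : ℝ) := by
      apply IsBigO.of_bound C
      filter_upwards [hev1, hevQ] with z hz1 hzQ
      have hzre : (0:ℝ) ≤ z.re := le_of_lt hzQ.1
      have hzim : (0:ℝ) ≤ z.im := le_of_lt hzQ.2
      obtain ⟨harg0, harg1⟩ := hargQ z hzre hzim
      set r : ℝ := ‖z‖ with hrdef
      have hr0 : (0:ℝ) < r := lt_of_lt_of_le one_pos hz1
      have hL0 : 0 ≤ Real.log r := Real.log_nonneg hz1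
      have hfrac : (r / ‖1 + z‖)^(N+1) ≤ 1 := by
        apply pow_le_one₀ (by positivity)
        rw [div_le_one (lt_of_lt_of_le one_pos (one_le_abs_one_add hzre))]
        exact abs_le_abs_one_add hzre
      have hexp_le : Real.exp ((1 + α - 2*c*z.arg/Real.pi) * Real.log r) ≤ (1+r)^(⌈α⌉₊ + 1) := by
        have h1 : (1 + α - 2*c*z.arg/Real.pi) ≤ 1 + α := by
          have hπ : 0 < Real.pi := Real.pi_pos
          have : 0 ≤ 2*c*z.arg/Real.pi := by positivity
          linarith
        calc Real.exp ((1 + α - 2*c*z.arg/Real.pi) * Real.log r)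
            ≤ Real.exp ((1 + α) * Real.log r) :=
              Real.exp_le_exp.2 (mul_le_mul_of_nonneg_right h1 hL0)
          _ = r ^ (1 + α) := by rw [Real.rpow_def_of_pos hr0]; ring_nf
          _ ≤ (1+r) ^ (1 + α) := Real.rpow_le_rpow (le_of_lt hr0) (by linarith) (by positivity)
          _ ≤ (1+r) ^ ((⌈α⌉₊ + 1 : ℕ):ℝ) := by
              apply Real.rpow_le_rpow_of_exponent_le (by linarith)
              push_cast
              have := Nat.le_ceil α
              linarith
          _ = (1+r)^(⌈α⌉₊ + 1) := by rw [Real.rpow_natCast]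
      rw [Real.norm_eq_abs, _root_.abs_of_nonneg (by positivity)]
      calc ‖H z‖ = ‖G z‖ *
            Real.exp ((1 + α - 2*c*z.arg/Real.pi) * Real.log r) *
            (r / ‖1 + z‖)^(N+1) := hnorm z
        _ ≤ (C * (1+r)^k) * (1+r)^(⌈α⌉₊ + 1) * 1 := by
            apply mul_le_mul _ hfrac (by positivity) (by positivity)
            exact mul_le_mul (hpoly z hzre hzim) hexp_le (le_of_lt (Real.exp_pos _))
              (by positivity)
        _ = C * (1+r)^K := by
            rw [mul_one, hKdef]
            rw [pow_add, pow_add]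
            ring
    have hstep2 : (fun z : ℂ => ((1 + ‖z‖)^K : ℝ)) =O[l]
        fun z => Real.exp (1 * ‖z‖ ^ (1:ℝ)) := by
      have hr : (fun x : ℝ => (1 + x)^K) =O[atTop] fun x => Real.exp (1 * x ^ (1:ℝ)) := by
        have h1 : (fun x : ℝ => (1+x)^K) =o[atTop] fun x => Real.exp (1 + x) := by
          have := (Real.isLittleO_pow_exp_atTop (n := K)).comp_tendsto
            (tendsto_atTop_add_const_left atTop 1 tendsto_id)
          simpa [Function.comp_def] using this
        have h2 : (fun x : ℝ => Real.exp (1+x)) =O[atTop] fun x => Real.exp (1 * x ^ (1:ℝ)) := by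
          apply IsBigO.of_bound (Real.exp 1)
          filter_upwards [eventually_ge_atTop (0:ℝ)] with x hx
          rw [Real.norm_eq_abs, Real.norm_eq_abs, _root_.abs_of_pos (Real.exp_pos _),
            _root_.abs_of_pos (Real.exp_pos _), Real.rpow_one, one_mul, ← Real.exp_add]
        exact h1.isBigO.trans h2
      exact hr.comp_tendsto habs_tendsto
    exact hstep1.trans hstep2
  -- bound and decay on the real axis
  have hre0 : Tendsto (fun r : ℝ => ‖H r‖) atTop (nhds 0) := by
    apply squeeze_zero' (g := fun r : ℝ => ‖G r‖ * r ^ (1 + α))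
    · filter_upwards with r using norm_nonneg _
    · filter_upwards [eventually_gt_atTop (0:ℝ)] with r hr
      have habs : ‖(r:ℂ)‖ = r := by
        rw [Complex.norm_real, Real.norm_eq_abs, _root_.abs_of_pos hr]
      have harg : (r:ℂ).arg = 0 := Complex.arg_ofReal_of_nonneg (le_of_lt hr)
      have hfrac : (‖(r:ℂ)‖ / ‖1 + (r:ℂ)‖)^(N+1) ≤ 1 := by
        apply pow_le_one₀ (by positivity)
        rw [div_le_one (lt_of_lt_of_le one_pos (one_le_abs_one_add (by simp [le_of_lt hr])))]
        exact abs_le_abs_one_add (by simp [le_of_lt hr])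
      calc ‖H r‖ ≤ ‖G r‖ *
            Real.exp ((1 + α - 2*c*(r:ℂ).arg/Real.pi) * Real.log (‖(r:ℂ)‖)) * 1 := by
            rw [hnorm (r:ℂ)]
            exact mul_le_mul_of_nonneg_left hfrac (by positivity)
        _ = ‖G r‖ * r ^ (1 + α) := by
            rw [harg, habs, mul_one, Real.rpow_def_of_pos hr]
            ring_nf
    · exact hreal
  -- bound and decay on the imaginary axis
  have him0 : Tendsto (fun r : ℝ => ‖H (r * I)‖) atTop (nhds 0) := by
    apply squeeze_zero' (g := fun r : ℝ => ‖G (r * I)‖ / r ^ (N:ℝ))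
    · filter_upwards with r using norm_nonneg _
    · filter_upwards [eventually_gt_atTop (0:ℝ)] with r hr
      have habs : ‖(r:ℂ) * I‖ = r := by
        rw [norm_mul, Complex.norm_I, Complex.norm_real, Real.norm_eq_abs, _root_.abs_of_pos hr, mul_one]
      have harg : ((r:ℂ) * I).arg = Real.pi / 2 := by
        rw [Complex.arg_real_mul I hr, Complex.arg_I]
      have hre' : (0:ℝ) ≤ ((r:ℂ) * I).re := by simp
      have hfrac : (‖(r:ℂ)*I‖ / ‖1 + (r:ℂ)*I‖)^(N+1) ≤ 1 := by
        apply pow_le_one₀ (by positivity)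
        rw [div_le_one (lt_of_lt_of_le one_pos (one_le_abs_one_add hre'))]
        exact abs_le_abs_one_add hre'
      have hexpeq : 1 + α - 2*c*(Real.pi/2)/Real.pi = -(N:ℝ) := by
        rw [hcdef]
        field_simp
        ring
      calc ‖H ((r:ℂ)*I)‖ ≤ ‖G ((r:ℂ)*I)‖ *
            Real.exp ((1 + α - 2*c*((r:ℂ)*I).arg/Real.pi) *
              Real.log (‖(r:ℂ)*I‖)) * 1 := by
            rw [hnorm ((r:ℂ)*I)]
            exact mul_le_mul_of_nonneg_left hfrac (by positivity)
        _ = ‖G ((r:ℂ)*I)‖ / r ^ (N:ℝ) := by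
            rw [harg, habs, mul_one, hexpeq, Real.rpow_def_of_pos hr]
            rw [div_eq_mul_inv, ← Real.exp_neg]
            ring_nf
    · exact himag
  -- boundedness on the axes
  obtain ⟨M₁, hM₁0, hM₁⟩ := exists_bound_of_tendsto (fun r => ‖H r‖)
    (by
      apply ContinuousOn.norm
      apply hHc.comp Complex.continuous_ofReal.continuousOn
      intro x hx
      exact ⟨by simpa using hx, by simp⟩) hre0
  obtain ⟨M₂, hM₂0, hM₂⟩ := exists_bound_of_tendsto (fun r => ‖H (r * I)‖)
    (by
      apply ContinuousOn.norm
      apply hHc.comp (Complex.continuous_ofReal.mul continuous_const).continuousOn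
      intro x hx
      exact ⟨by simp, by simpa using hx⟩) him0
  -- apply the Phragmén–Lindelöf ray lemma
  have hray := pl_ray_tendsto H ⟨hHdiff, by rw [hSclosure]; exact hHc⟩ hB
    (max M₁ M₂) (le_trans hM₁0 (le_max_left _ _))
    (fun x hx => le_trans (hM₁ x hx) (le_max_left _ _))
    (fun x hx => le_trans (hM₂ x hx) (le_max_right _ _))
    hre0 him0 θ hθ0 hθ1
  -- conclude
  refine squeeze_zero' (g := fun r : ℝ => 2^(N+1) * ‖H ((r:ℂ) * Complex.exp ((θ:ℂ) * I))‖) ?_ ?_ ?_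
  · filter_upwards [eventually_ge_atTop (1:ℝ)] with r hr
    positivity
  · filter_upwards [eventually_ge_atTop (1:ℝ)] with r hr
    have hrpos : (0:ℝ) < r := lt_of_lt_of_le one_pos hr
    obtain ⟨habs, harg⟩ := ray_abs_arg hrpos hθ0 hθ1
    set z : ℂ := r * Complex.exp (θ * I) with hzdef
    have hzre : 0 ≤ z.re := by
      rw [hzdef]
      simp only [Complex.re_ofReal_mul, Complex.exp_ofReal_mul_I_re]
      have : 0 ≤ Real.cos θ := Real.cos_nonneg_of_mem_Icc ⟨by linarith [Real.pi_pos], hθ1⟩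
      positivity
    have h2r : ‖1 + z‖ ≤ 2 * r := by
      calc ‖1 + z‖ ≤ ‖1‖ + ‖z‖ := norm_add_le _ _
        _ = 1 + r := by rw [habs, norm_one]
        _ ≤ 2 * r := by linarith
    have h1z := one_le_abs_one_add hzre
    have hkey : ‖G z‖ * r ^ (1 + α - 2*θ/Real.pi * (1 + α + N)) =
        ‖H z‖ * (‖1 + z‖ / r)^(N+1) := by
      rw [hnorm z, harg, habs, Real.rpow_def_of_pos hrpos]
      have hc2 : 1 + α - 2*θ/Real.pi * (1 + α + N) = 1 + α - 2*c*θ/Real.pi := by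
        rw [hcdef]; ring
      rw [hc2]
      rw [div_pow, div_pow]
      have hrne : (r:ℝ)^(N+1) ≠ 0 := by positivity
      have habsne : ‖1+z‖^(N+1) ≠ 0 := by positivity
      field_simp
      all_goals first
      | (left; trivial)
      | ring
      all_goals tauto
    calc ‖G z‖ * r ^ (1 + α - 2*θ/Real.pi * (1 + α + N))
        = ‖H z‖ * (‖1 + z‖ / r)^(N+1) := hkey
      _ ≤ ‖H z‖ * (2*r/r)^(N+1) := by
          apply mul_le_mul_of_nonneg_left _ (norm_nonneg _)
          gcongr
      _ = 2^(N+1) * ‖H z‖ := by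
          rw [mul_div_assoc, div_self (ne_of_gt hrpos), mul_one, mul_comm]
  · have := hray.const_mul (2^(N+1) : ℝ)
    simpa using this
end

section
/- Let G(z) = conj(G(conj z)) be holomorphic in ℂ ∖ ℝ and real on a nonempty open real interval containing 0, satisfying an N-times subtracted dispersion relation with Im G(t) ≥ 0 for all real t (N even), and suppose Im G is not identically zero. Then G(iy)/y^N → 0 as y → +∞. -/
open Complex Filter MeasureTheory

/-- If `G` is real-analytic-type symmetric (`G(z̄) = conj G(z)`), holomorphic off
the real axis, and satisfies an `N`-times subtracted dispersion relation with a
nonnegative discontinuity `ρ` (not identically zero, vanishing near `0`), `N`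
even, then `G(iy)/y^N → 0` as `y → +∞`. -/
theorem dispersion_decay_on_imaginary_axis (G : ℂ → ℂ) (ρ : ℝ → ℝ) (c : ℕ → ℝ)
    (N : ℕ) (hN : Even N)
    (hsym : ∀ z : ℂ, G ((starRingEnd ℂ) z) = (starRingEnd ℂ) (G z))
    (hGd : DifferentiableOn ℂ G {z : ℂ | z.im ≠ 0})
    (hρpos : ∀ t : ℝ, 0 ≤ ρ t) (hρne : ∃ t : ℝ, ρ t ≠ 0)
    (hρ0 : ∃ ε > (0:ℝ), ∀ t : ℝ, |t| < ε → ρ t = 0)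
    (hint : Integrable fun t : ℝ => ρ t / |t| ^ (N + 1))
    (hdisp : ∀ z : ℂ, z.im ≠ 0 →
      G z = (∑ n ∈ Finset.range N, (c n : ℂ) * z ^ n) +
        z ^ N / (Real.pi : ℂ) * ∫ t : ℝ, (ρ t : ℂ) / (((t : ℂ) - z) * (t : ℂ) ^ N)) :
    Tendsto (fun y : ℝ => G (y * Complex.I) / (y : ℂ) ^ N) atTop (nhds 0) := by
  obtain ⟨ε, hε, hερ⟩ := hρ0
  have hρ0' : ρ 0 = 0 := hερ 0 (by simpa using hε)
  -- measurability of ρ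
  have hρm : AEStronglyMeasurable ρ (volume : Measure ℝ) := by
    have heq : ρ = fun t => (ρ t / |t| ^ (N + 1)) * |t| ^ (N + 1) := by
      funext t
      by_cases ht : t = 0
      · simp [ht, hρ0']
      · rw [div_mul_cancel₀]
        exact pow_ne_zero _ (abs_ne_zero.mpr ht)
    rw [heq]
    have hcont : Continuous fun t : ℝ => |t| ^ (N + 1) := continuous_abs.pow _
    exact hint.aestronglyMeasurable.mul hcont.aestronglyMeasurable
  -- the integral term tends to 0
  have hJ : Tendsto (fun y : ℝ =>
      ∫ t : ℝ, (ρ t : ℂ) / (((t : ℂ) - (y : ℂ) * I) * (t : ℂ) ^ N)) atTop (nhds 0) := by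
    have h0 : (nhds (0:ℂ)) = nhds (∫ t : ℝ, (0 : ℂ)) := by simp
    rw [h0]
    apply tendsto_integral_filter_of_dominated_convergence
      (fun t => |ρ t| / |t| ^ (N + 1))
    · filter_upwards with y
      have h1 : AEStronglyMeasurable (fun t : ℝ => (ρ t : ℂ)) volume :=
        Complex.continuous_ofReal.comp_aestronglyMeasurable hρm
      have h2 : AEStronglyMeasurable
          (fun t : ℝ => ((t : ℂ) - (y : ℂ) * I) * (t : ℂ) ^ N) volume :=
        ((Complex.continuous_ofReal.sub continuous_const).mul
          (Complex.continuous_ofReal.pow _)).aestronglyMeasurable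
      simp only [div_eq_mul_inv]
      have h2m : Measurable (fun t : ℝ => ((t : ℂ) - (y : ℂ) * I) * (t : ℂ) ^ N) :=
        ((Complex.measurable_ofReal.sub measurable_const).mul
          (Complex.measurable_ofReal.pow_const _))
      exact h1.mul h2m.inv.aestronglyMeasurable
    · filter_upwards [eventually_ge_atTop (0:ℝ)] with y hy
      filter_upwards with t
      by_cases ht : |t| < ε
      · simp [hερ t ht]
      · have htne : t ≠ 0 := by
          intro h; apply ht; simpa [h] using hε
        have htabs : (0:ℝ) < |t| := abs_pos.mpr htne
        rw [norm_div, norm_mul, norm_pow, Complex.norm_real, Complex.norm_real,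
          Real.norm_eq_abs, Real.norm_eq_abs]
        have h1 : |t| ≤ ‖(t : ℂ) - (y : ℂ) * I‖ := by
          have := Complex.abs_re_le_norm ((t : ℂ) - (y : ℂ) * I)
          simpa using this
        have h2 : |t| ^ (N + 1) ≤ ‖(t : ℂ) - (y : ℂ) * I‖ * |t| ^ N := by
          rw [pow_succ, mul_comm]
          exact mul_le_mul_of_nonneg_right h1 (pow_nonneg (abs_nonneg _) _)
        exact div_le_div_of_nonneg_left (abs_nonneg _) (by positivity) h2
    · have heq2 : (fun t : ℝ => |ρ t / |t| ^ (N + 1)|)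
          = fun t : ℝ => |ρ t| / |t| ^ (N + 1) := by
        funext t
        rw [abs_div, _root_.abs_pow, _root_.abs_abs]
      rw [← heq2]
      exact hint.abs
    · filter_upwards with t
      by_cases ht : |t| < ε
      · simpa [hερ t ht] using (tendsto_const_nhds : Tendsto (fun _ : ℝ => (0:ℂ)) atTop _)
      · have htne : t ≠ 0 := by
          intro h; apply ht; simpa [h] using hε
        have htabs : (0:ℝ) < |t| := abs_pos.mpr htne
        apply squeeze_zero_norm' (a := fun y : ℝ => (|ρ t| / |t| ^ N) * y⁻¹)
        · filter_upwards [eventually_gt_atTop (0:ℝ)] with y hy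
          rw [norm_div, norm_mul, norm_pow, Complex.norm_real, Complex.norm_real,
            Real.norm_eq_abs, Real.norm_eq_abs]
          have h1 : y ≤ ‖(t : ℂ) - (y : ℂ) * I‖ := by
            have h := Complex.abs_im_le_norm ((t : ℂ) - (y : ℂ) * I)
            have him : ((t : ℂ) - (y : ℂ) * I).im = -y := by simp
            rw [him, abs_neg, abs_of_pos hy] at h
            simpa using h
          have h2 : |t| ^ N * y ≤ ‖(t : ℂ) - (y : ℂ) * I‖ * |t| ^ N := by
            rw [mul_comm]
            exact mul_le_mul_of_nonneg_right h1 (pow_nonneg (abs_nonneg _) _)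
          calc |ρ t| / (‖(t : ℂ) - (y : ℂ) * I‖ * |t| ^ N)
              ≤ |ρ t| / (|t| ^ N * y) :=
                div_le_div_of_nonneg_left (abs_nonneg _) (by positivity) h2
            _ = |ρ t| / |t| ^ N * y⁻¹ := by
                rw [div_mul_eq_div_div, div_eq_mul_inv]
        · simpa using (tendsto_inv_atTop_zero.const_mul (|ρ t| / |t| ^ N))
  -- the polynomial term tends to 0
  have hP : Tendsto (fun y : ℝ =>
      ∑ n ∈ Finset.range N, (c n : ℂ) * ((y : ℂ) * I) ^ n / (y : ℂ) ^ N) atTop (nhds 0) := by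
    have : (0:ℂ) = ∑ n ∈ Finset.range N, (0:ℂ) := by simp
    rw [this]
    apply tendsto_finset_sum
    intro n hn
    have hn' : n < N := Finset.mem_range.mp hn
    have hre : Tendsto (fun y : ℝ => y ^ n / y ^ N) atTop (nhds 0) :=
      tendsto_pow_div_pow_atTop_zero hn'
    have hcast : Tendsto (fun y : ℝ => ((y ^ n / y ^ N : ℝ) : ℂ)) atTop (nhds 0) := by
      rw [show ((0:ℂ)) = ((0:ℝ):ℂ) by simp]
      exact (Complex.continuous_ofReal.tendsto 0).comp hre
    have heq : (fun y : ℝ => (c n : ℂ) * ((y : ℂ) * I) ^ n / (y : ℂ) ^ N)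
        = fun y : ℝ => ((c n : ℂ) * I ^ n) * ((y ^ n / y ^ N : ℝ) : ℂ) := by
      funext y
      push_cast
      ring
    rw [heq]
    simpa using hcast.const_mul ((c n : ℂ) * I ^ n)
  -- combine
  have key : (fun y : ℝ => G (y * Complex.I) / (y : ℂ) ^ N) =ᶠ[atTop]
      fun y : ℝ => (∑ n ∈ Finset.range N, (c n : ℂ) * ((y : ℂ) * I) ^ n / (y : ℂ) ^ N) +
        (I ^ N / (Real.pi : ℂ)) *
          ∫ t : ℝ, (ρ t : ℂ) / (((t : ℂ) - (y : ℂ) * I) * (t : ℂ) ^ N) := by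
    filter_upwards [eventually_gt_atTop (0:ℝ)] with y hy
    have him : ((y : ℂ) * I).im ≠ 0 := by
      simp only [Complex.mul_I_im, Complex.ofReal_re]
      exact hy.ne'
    have hyN : ((y:ℂ)) ^ N ≠ 0 := pow_ne_zero _ (by exact_mod_cast hy.ne')
    have hπ : (Real.pi : ℂ) ≠ 0 := by exact_mod_cast Real.pi_ne_zero
    rw [hdisp _ him, add_div, Finset.sum_div]
    congr 1
    rw [mul_pow]
    field_simp
  have h2 := hP.add (hJ.const_mul (I ^ N / (Real.pi : ℂ)))
  simp only [mul_zero, add_zero] at h2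
  exact Tendsto.congr' key.symm h2
end
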